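/- arXiv:2211.16637 — 5 statements merged into one kernel-verified Lean document; each statement's English description precedes it below -/
import Mathlib

section
/- Let P = (X, ≺) be a finite poset on |X| = n ≥ 2 elements and let A ⊆ X be a nonempty subset. For a linear extension f of P set f_min(A) := min{ f(a) : a ∈ A }. Then: (i) ( #{f ∈ E(P) : f_min(A) > 1} )² ≥ #{f ∈ E(P) : f_min(A) > 2} · e(P); and (ii) #{f ∈ E(P) : f_min(A) = 1} · #{f ∈ E(P) : f_min(A) > 1} ≤ #{f ∈ E(P) : f_min(A) = 2} · e(P). Equivalently, for a uniform random linear extension f: P[f_min(A) > 1]² ≥ P[f_min(A) > 2] and P[f_min(A) = 1] · P[f_min(A) > 1] ≤ P[f_min(A) = 2]. -/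
/-- The type of linear extensions of a finite poset `α`:
order-preserving bijections onto `Fin n` (values thought of as `{1, …, n}`). -/
abbrev LinExt (α : Type*) [Fintype α] [PartialOrder α] :=
  {f : α ≃ Fin (Fintype.card α) // ∀ a b : α, a < b → f a < f b}

/-- `leval f x` is the value `f(x) ∈ {1, …, n}` of the linear extension `f` at `x`. -/
def leval {α : Type*} [Fintype α] [PartialOrder α] (f : LinExt α) (x : α) : ℕ :=
  (f.1 x).1 + 1

/-- The number of linear extensions of the finite poset `α`. -/
noncomputable def linExtCount (α : Type*) [Fintype α] [PartialOrder α] : ℕ :=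
  Nat.card (LinExt α)

open Finset Function
open scoped Classical FinsetFamily

namespace Stmt5Aux

/-! ### Generic counting of monotone and strictly order preserving injective maps -/

section Maps
variable (β : Type*) [Fintype β] [PartialOrder β]

/-- The finset of monotone (weakly order preserving) maps `β → Fin N`. -/
noncomputable def monoMaps (N : ℕ) : Finset (β → Fin N) :=
  univ.filter fun ω => ∀ x y : β, x ≤ y → ω x ≤ ω y

/-- The finset of strictly order preserving injective maps `β → Fin M`. -/
noncomputable def siopMaps (M : ℕ) : Finset (β → Fin M) :=
  univ.filter fun h => (∀ x y : β, x < y → h x < h y) ∧ Function.Injective h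

lemma exists_linExt : Nonempty (LinExt β) := by
  letI : Fintype (LinearExtension β) := ‹Fintype β›
  have hc : Fintype.card (LinearExtension β) = Fintype.card β := rfl
  let e : Fin (Fintype.card β) ≃o LinearExtension β := monoEquivOfFin _ hc
  have hinj : Function.Injective (fun x : β => e.symm (toLinearExtension x)) := by
    intro x y hxy
    have h2 := e.symm.injective hxy
    exact h2
  have hbij : Function.Bijective (fun x : β => e.symm (toLinearExtension x)) :=
    (Fintype.bijective_iff_injective_and_card _).2 ⟨hinj, by simp⟩
  refine ⟨⟨Equiv.ofBijective _ hbij, fun x y hxy => ?_⟩⟩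
  have h1 : toLinearExtension (α := β) x < toLinearExtension y :=
    lt_of_le_of_ne (toLinearExtension.monotone hxy.le)
      (fun hEq => hxy.ne hEq)
  exact e.symm.strictMono h1

lemma siop_le_mono (M : ℕ) : (siopMaps β M).card ≤ (monoMaps β M).card := by
  apply card_le_card
  intro h hh
  simp only [siopMaps, monoMaps, mem_filter, mem_univ, true_and] at hh ⊢
  intro x y hxy
  rcases eq_or_lt_of_le hxy with h' | h'
  · exact le_of_eq (congrArg _ h')
  · exact (hh.1 x y h').le

lemma sup_mem_monoMaps {N : ℕ} {ω τ : β → Fin N} (hω : ω ∈ monoMaps β N)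
    (hτ : τ ∈ monoMaps β N) : ω ⊔ τ ∈ monoMaps β N := by
  simp only [monoMaps, mem_filter, mem_univ, true_and] at hω hτ ⊢
  intro x y hxy
  exact sup_le_sup (hω x y hxy) (hτ x y hxy)

lemma inf_mem_monoMaps {N : ℕ} {ω τ : β → Fin N} (hω : ω ∈ monoMaps β N)
    (hτ : τ ∈ monoMaps β N) : ω ⊓ τ ∈ monoMaps β N := by
  simp only [monoMaps, mem_filter, mem_univ, true_and] at hω hτ ⊢
  intro x y hxy
  exact inf_le_inf (hω x y hxy) (hτ x y hxy)

lemma monoMaps_sups (N : ℕ) : (monoMaps β N) ⊻ (monoMaps β N) = monoMaps β N := by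
  apply le_antisymm
  · intro ω hω
    rw [Finset.mem_sups] at hω
    obtain ⟨u, hu, v, hv, rfl⟩ := hω
    exact sup_mem_monoMaps β hu hv
  · intro ω hω
    rw [Finset.mem_sups]
    exact ⟨ω, hω, ω, hω, sup_idem ω⟩

lemma monoMaps_infs (N : ℕ) : (monoMaps β N) ⊼ (monoMaps β N) = monoMaps β N := by
  apply le_antisymm
  · intro ω hω
    rw [Finset.mem_infs] at hω
    obtain ⟨u, hu, v, hv, rfl⟩ := hω
    exact inf_mem_monoMaps β hu hv
  · intro ω hω
    rw [Finset.mem_infs]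
    exact ⟨ω, hω, ω, hω, inf_idem ω⟩

lemma mono_le_siop (N : ℕ) :
    (monoMaps β N).card ≤ (siopMaps β (N + Fintype.card β)).card := by
  obtain ⟨ρ⟩ := exists_linExt β
  set m := Fintype.card β with hm
  set lex : (β → Fin N) → β → β → Prop :=
    fun ω x y => ω x < ω y ∨ (ω x = ω y ∧ ρ.1 x < ρ.1 y) with hlex
  set r : (β → Fin N) → β → ℕ := fun ω x => (univ.filter fun y => lex ω y x).card with hr
  have htrans : ∀ ω x y z, lex ω x y → lex ω y z → lex ω x z := by
    intro ω x y z h1 h2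
    rcases h1 with h1 | ⟨e1, p1⟩ <;> rcases h2 with h2 | ⟨e2, p2⟩
    · exact Or.inl (h1.trans h2)
    · exact Or.inl (lt_of_lt_of_le h1 (le_of_eq e2))
    · exact Or.inl (lt_of_le_of_lt (le_of_eq e1) h2)
    · exact Or.inr ⟨e1.trans e2, p1.trans p2⟩
  have hirr : ∀ ω x, ¬ lex ω x x := by
    intro ω x h
    rcases h with h | ⟨_, h⟩ <;> exact lt_irrefl _ h
  have hrlt : ∀ ω x y, lex ω x y → r ω x < r ω y := by
    intro ω x y h
    apply card_lt_card
    constructor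
    · intro u hu
      simp only [mem_filter, mem_univ, true_and] at hu ⊢
      exact htrans ω u x y hu h
    · intro hsub
      have hx : x ∈ univ.filter fun u => lex ω u y := by
        simp only [mem_filter, mem_univ, true_and]; exact h
      have h2 := hsub hx
      simp only [mem_filter, mem_univ, true_and] at h2
      exact hirr ω x h2
  have htri : ∀ ω (x y : β), x ≠ y → lex ω x y ∨ lex ω y x := by
    intro ω x y hxy
    rcases lt_trichotomy (ω x) (ω y) with h | h | h
    · exact Or.inl (Or.inl h)
    · rcases lt_or_gt_of_ne (fun e => hxy (ρ.1.injective e)) with hp | hp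
      · exact Or.inl (Or.inr ⟨h, hp⟩)
      · exact Or.inr (Or.inr ⟨h.symm, hp⟩)
    · exact Or.inr (Or.inl h)
  have hbound : ∀ ω (x : β), (ω x : ℕ) + r ω x < N + m := by
    intro ω x
    have h1 : r ω x ≤ (univ.erase x).card := by
      apply card_le_card
      intro u hu
      simp only [mem_filter, mem_univ, true_and] at hu
      simp only [mem_erase, mem_univ, and_true]
      intro e
      exact hirr ω x (e ▸ hu)
    rw [card_erase_of_mem (mem_univ x), card_univ] at h1
    have h2 := (ω x).2
    have h3 : 1 ≤ m := Fintype.card_pos_iff.2 ⟨x⟩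
    omega
  set F : (β → Fin N) → β → Fin (N + m) :=
    fun ω x => ⟨(ω x : ℕ) + r ω x, hbound ω x⟩ with hF
  have hFlt : ∀ ω x y, lex ω x y → F ω x < F ω y := by
    intro ω x y h
    have h1 := hrlt ω x y h
    have h2 : (ω x : ℕ) ≤ (ω y : ℕ) := by
      rcases h with h | ⟨e, _⟩
      · exact le_of_lt h
      · exact le_of_eq (congrArg Fin.val e)
    exact Fin.mk_lt_mk.2 (by omega)
  apply Finset.card_le_card_of_injOn F
  · intro ω hω
    simp only [Finset.mem_coe, monoMaps, mem_filter, mem_univ, true_and] at hω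
    simp only [Finset.mem_coe, siopMaps, mem_filter, mem_univ, true_and]
    constructor
    · intro x y hxy
      apply hFlt
      rcases lt_or_eq_of_le (hω x y hxy.le) with h | h
      · exact Or.inl h
      · exact Or.inr ⟨h, ρ.2 x y hxy⟩
    · intro x y hxy
      by_contra hne
      rcases htri ω x y hne with h | h
      · exact absurd hxy (ne_of_lt (hFlt ω x y h))
      · exact absurd hxy.symm (ne_of_lt (hFlt ω y x h))
  · intro ω hω τ hτ heq
    have hrank : ∀ (ω : β → Fin N) x, r ω x = (univ.filter fun y => F ω y < F ω x).card := by
      intro ω x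
      show (univ.filter fun y => lex ω y x).card = _
      apply congrArg Finset.card
      ext u
      simp only [mem_filter, mem_univ, true_and]
      constructor
      · exact fun h => hFlt ω u x h
      · intro h
        by_contra hcon
        rcases eq_or_ne u x with rfl | hne
        · exact lt_irrefl _ h
        · rcases htri ω u x hne with h2 | h2
          · exact hcon h2
          · exact absurd h (not_lt_of_ge (le_of_lt (hFlt ω x u h2)))
    funext x
    have e1 : F ω x = F τ x := congrFun heq x
    have e2 : r ω x = r τ x := by
      rw [hrank ω x, hrank τ x, heq]
    have e3 : (ω x : ℕ) + r ω x = (τ x : ℕ) + r τ x := congrArg Fin.val e1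
    exact Fin.val_injective (by omega : (ω x : ℕ) = (τ x : ℕ))

end Maps

/-! ### Strict maps on the complement of a prefix of minimal elements -/

section Prefix
variable {α : Type*} [Fintype α] [PartialOrder α] {k : ℕ}

/-- Number of linear extensions of `α` whose first `k` values are `σ 0, …, σ (k-1)`. -/
noncomputable def Dcard (σ : Fin k → α) (hk : k ≤ Fintype.card α) : ℕ :=
  Nat.card {f : LinExt α // ∀ i, f.1 (σ i) = Fin.castLE hk i}

lemma card_compl (σ : Fin k → α) (hσ : Function.Injective σ) :
    Fintype.card {x : α // ∀ i, x ≠ σ i} = Fintype.card α - k := by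
  rw [Fintype.card_subtype]
  have h : univ.filter (fun x : α => ∀ i, x ≠ σ i) = univ \ (univ.image σ) := by
    ext x
    simp [eq_comm]
  rw [h, card_sdiff_of_subset (subset_univ _), card_univ, card_image_of_injective _ hσ, card_univ,
    Fintype.card_fin]

lemma card_siop_compl (σ : Fin k → α) (hk : k ≤ Fintype.card α) (hσ : Function.Injective σ)
    (hmin : ∀ i, IsMin (σ i)) (M : ℕ) :
    (siopMaps {x : α // ∀ i, x ≠ σ i} M).card
      = Dcard σ hk * M.choose (Fintype.card α - k) := by
  set n := Fintype.card α with hn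
  set T := {x : α // ∀ i, x ≠ σ i} with hT
  have hcT : Fintype.card T = n - k := card_compl σ hσ
  have key1 : ∀ (f : LinExt α), (∀ i, f.1 (σ i) = Fin.castLE hk i) →
      ∀ x : T, k ≤ (f.1 x.1 : ℕ) := by
    intro f hf x
    by_contra hlt
    push_neg at hlt
    have h2 : f.1 (σ ⟨(f.1 x.1 : ℕ), hlt⟩) = f.1 x.1 := by
      rw [hf ⟨(f.1 x.1 : ℕ), hlt⟩]
      apply Fin.val_injective
      simp
    exact x.2 ⟨(f.1 x.1 : ℕ), hlt⟩ (f.1.injective h2).symm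
  set G : {f : LinExt α // ∀ i, f.1 (σ i) = Fin.castLE hk i}
      × {V : Finset (Fin M) // V.card = n - k} → (T → Fin M) := fun p x =>
    p.2.1.orderEmbOfFin p.2.2 ⟨(p.1.1.1 x.1 : ℕ) - k, by
      have h1 := key1 p.1.1 p.1.2 x
      have h2 := (p.1.1.1 x.1).2
      omega⟩ with hG
  have hGmem : ∀ p, G p ∈ siopMaps T M := by
    rintro ⟨f, V⟩
    simp only [siopMaps, mem_filter, mem_univ, true_and]
    constructor
    · intro x y hxy
      apply (V.1.orderEmbOfFin V.2).strictMono
      have h3 : f.1.1 x.1 < f.1.1 y.1 := f.1.2 x.1 y.1 (Subtype.coe_lt_coe.2 hxy)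
      have h4 := key1 f.1 f.2 x
      rw [Fin.lt_def] at h3 ⊢
      simp only
      omega
    · intro x y hxy
      have h6 := (V.1.orderEmbOfFin V.2).injective hxy
      have h7 : (f.1.1 x.1 : ℕ) - k = (f.1.1 y.1 : ℕ) - k := congrArg Fin.val h6
      have h4 := key1 f.1 f.2 x
      have h5 := key1 f.1 f.2 y
      have h8 : f.1.1 x.1 = f.1.1 y.1 := Fin.val_injective (by omega)
      exact Subtype.ext (f.1.1.injective h8)
  have himg : ∀ p, univ.image (G p) = p.2.1 := by
    intro p
    have hinj : Function.Injective (G p) := by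
      have h0 := hGmem p
      simp only [siopMaps, mem_filter, mem_univ, true_and] at h0
      exact h0.2
    apply Finset.eq_of_subset_of_card_le
    · intro j hj
      rw [Finset.mem_image] at hj
      obtain ⟨x, _, rfl⟩ := hj
      exact Finset.orderEmbOfFin_mem _ _ _
    · rw [p.2.2, Finset.card_image_of_injective _ hinj, card_univ, hcT]
  have hGinj : Function.Injective G := by
    rintro ⟨f, ⟨V, hV⟩⟩ ⟨g, ⟨W, hW⟩⟩ heq
    have hVW : V = W := by
      have h1 := himg ⟨f, ⟨V, hV⟩⟩
      have h2 := himg ⟨g, ⟨W, hW⟩⟩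
      simp only at h1 h2
      rw [← h1, ← h2, heq]
    subst hVW
    have hfg : f.1 = g.1 := by
      apply Subtype.ext
      apply Equiv.ext
      intro x
      by_cases hx : ∃ i, σ i = x
      · obtain ⟨i, rfl⟩ := hx
        rw [f.2 i, g.2 i]
      · have hxT : ∀ i, x ≠ σ i := fun i e => hx ⟨i, e.symm⟩
        have h3 := congrFun heq (⟨x, hxT⟩ : T)
        simp only [hG] at h3
        have h4 := (V.orderEmbOfFin hV).injective h3
        have h7 : ((f.1.1 x : ℕ) - k) = ((g.1.1 x : ℕ) - k) := by
          have h8 := congrArg Fin.val h4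
          simpa using h8
        have h5 : k ≤ (f.1.1 x : ℕ) := by simpa using key1 f.1 f.2 ⟨x, hxT⟩
        have h6 : k ≤ (g.1.1 x : ℕ) := by simpa using key1 g.1 g.2 ⟨x, hxT⟩
        exact Fin.val_injective (by omega)
    exact Prod.ext (Subtype.ext hfg) (Subtype.ext rfl)
  have hGsurj : ∀ h ∈ siopMaps T M, ∃ p, G p = h := by
    intro h hh
    simp only [siopMaps, mem_filter, mem_univ, true_and] at hh
    obtain ⟨hSP, hInj⟩ := hh
    set V : Finset (Fin M) := univ.image h with hVdef
    have hV : V.card = n - k := by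
      rw [hVdef, Finset.card_image_of_injective _ hInj, card_univ, hcT]
    have hmem : ∀ x : T, h x ∈ V := fun x => Finset.mem_image_of_mem h (mem_univ x)
    set rk : T → Fin (n - k) := fun x => (V.orderIsoOfFin hV).symm ⟨h x, hmem x⟩ with hrk
    set φ : α → Fin n := fun x =>
      if hx : ∃ i, σ i = x then Fin.castLE hk hx.choose
      else ⟨k + (rk ⟨x, fun i e => hx ⟨i, e.symm⟩⟩ : ℕ), by
        have h9 := (rk ⟨x, fun i e => hx ⟨i, e.symm⟩⟩).2
        omega⟩ with hφ
    have hσval : ∀ i, φ (σ i) = Fin.castLE hk i := by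
      intro i
      have hex : ∃ j, σ j = σ i := ⟨i, rfl⟩
      have hch : σ hex.choose = σ i := hex.choose_spec
      have hchi : hex.choose = i := hσ hch
      simp only [hφ]
      rw [dif_pos hex, hchi]
    have hge : ∀ x : T, (φ x.1 : ℕ) = k + (rk x : ℕ) := by
      intro x
      have hx : ¬ ∃ i, σ i = x.1 := fun ⟨i, e⟩ => x.2 i e.symm
      simp only [hφ]
      rw [dif_neg hx]
    have hrkinj : Function.Injective rk := by
      intro x y hxy
      simp only [hrk] at hxy
      have h4 := (V.orderIsoOfFin hV).symm.injective hxy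
      have h5 : h x = h y := congrArg Subtype.val h4
      exact hInj h5
    have hφinj : Function.Injective φ := by
      intro x y e
      have ev := congrArg Fin.val e
      by_cases hx : ∃ i, σ i = x <;> by_cases hy : ∃ i, σ i = y
      · obtain ⟨i, rfl⟩ := hx
        obtain ⟨j, rfl⟩ := hy
        rw [hσval i, hσval j] at e
        have hij : i = j := by
          have hv2 := congrArg Fin.val e
          simp only [Fin.coe_castLE] at hv2
          exact Fin.val_injective hv2
        rw [hij]
      · obtain ⟨i, rfl⟩ := hx
        have hy' : ∀ i, y ≠ σ i := fun i e' => hy ⟨i, e'.symm⟩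
        rw [congrArg Fin.val (hσval i)] at ev
        rw [hge ⟨y, hy'⟩] at ev
        have h2 := i.2
        simp only [Fin.coe_castLE] at ev
        omega
      · obtain ⟨j, rfl⟩ := hy
        have hx' : ∀ i, x ≠ σ i := fun i e' => hx ⟨i, e'.symm⟩
        rw [congrArg Fin.val (hσval j)] at ev
        rw [hge ⟨x, hx'⟩] at ev
        have h2 := j.2
        simp only [Fin.coe_castLE] at ev
        omega
      · have hx' : ∀ i, x ≠ σ i := fun i e' => hx ⟨i, e'.symm⟩
        have hy' : ∀ i, y ≠ σ i := fun i e' => hy ⟨i, e'.symm⟩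
        rw [hge ⟨x, hx'⟩, hge ⟨y, hy'⟩] at ev
        have h3 : rk ⟨x, hx'⟩ = rk ⟨y, hy'⟩ := Fin.val_injective (by omega)
        have h4 := hrkinj h3
        exact congrArg Subtype.val h4
    have hφbij : Function.Bijective φ :=
      (Fintype.bijective_iff_injective_and_card φ).2 ⟨hφinj, by rw [Fintype.card_fin]⟩
    have hφlt : ∀ x y : α, x < y → Equiv.ofBijective φ hφbij x < Equiv.ofBijective φ hφbij y := by
      intro x y hxy
      show φ x < φ y
      by_cases hy : ∃ i, σ i = y
      · obtain ⟨j, rfl⟩ := hy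
        exact absurd hxy (hmin j).not_lt
      · have hy' : ∀ i, y ≠ σ i := fun i e => hy ⟨i, e.symm⟩
        by_cases hx : ∃ i, σ i = x
        · obtain ⟨i, rfl⟩ := hx
          rw [Fin.lt_def, congrArg Fin.val (hσval i), hge ⟨y, hy'⟩]
          have h2 := i.2
          simp only [Fin.coe_castLE]
          omega
        · have hx' : ∀ i, x ≠ σ i := fun i e => hx ⟨i, e.symm⟩
          rw [Fin.lt_def, hge ⟨x, hx'⟩, hge ⟨y, hy'⟩]
          have hlt : (⟨x, hx'⟩ : T) < ⟨y, hy'⟩ := Subtype.mk_lt_mk.2 hxy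
          have h3 : h ⟨x, hx'⟩ < h ⟨y, hy'⟩ := hSP _ _ hlt
          have h4 : rk ⟨x, hx'⟩ < rk ⟨y, hy'⟩ := by
            simp only [hrk]
            exact (V.orderIsoOfFin hV).symm.lt_iff_lt.2 (Subtype.mk_lt_mk.2 h3)
          omega
    have hpref : ∀ i, (Equiv.ofBijective φ hφbij) (σ i) = Fin.castLE hk i := fun i => hσval i
    refine ⟨⟨⟨⟨Equiv.ofBijective φ hφbij, hφlt⟩, hpref⟩, ⟨V, hV⟩⟩, ?_⟩
    funext x
    simp only [hG]
    have hx := hge x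
    have hidx : (⟨((Equiv.ofBijective φ hφbij) x.1 : ℕ) - k, by
        have h1 := key1 ⟨Equiv.ofBijective φ hφbij, hφlt⟩ hpref x
        have h2 := ((Equiv.ofBijective φ hφbij) x.1).2
        omega⟩ : Fin (n - k)) = rk x := by
      apply Fin.val_injective
      show ((φ x.1 : ℕ) - k) = _
      rw [hx]
      omega
    rw [hidx]
    rw [← Finset.coe_orderIsoOfFin_apply]
    simp only [hrk]
    rw [OrderIso.apply_symm_apply]
  have key : Fintype.card ({f : LinExt α // ∀ i, f.1 (σ i) = Fin.castLE hk i}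
      × {V : Finset (Fin M) // V.card = n - k}) = (siopMaps T M).card := by
    rw [← Fintype.card_coe (siopMaps T M)]
    apply Fintype.card_congr
    apply Equiv.ofBijective (fun p => (⟨G p, hGmem p⟩ : {h // h ∈ siopMaps T M}))
    constructor
    · intro p q hpq
      exact hGinj (congrArg Subtype.val hpq)
    · rintro ⟨h, hh⟩
      obtain ⟨p, hp⟩ := hGsurj h hh
      exact ⟨p, Subtype.ext hp⟩
  rw [← key, Fintype.card_prod, Fintype.card_finset_len, Fintype.card_fin]
  rw [Dcard, Nat.card_eq_fintype_card]

lemma mono_lb (σ : Fin k → α) (hk : k ≤ Fintype.card α) (hσ : Function.Injective σ)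
    (hmin : ∀ i, IsMin (σ i)) (N : ℕ) :
    Dcard σ hk * N.choose (Fintype.card α - k)
      ≤ (monoMaps {x : α // ∀ i, x ≠ σ i} N).card := by
  rw [← card_siop_compl σ hk hσ hmin]
  exact siop_le_mono _ _

lemma mono_ub (σ : Fin k → α) (hk : k ≤ Fintype.card α) (hσ : Function.Injective σ)
    (hmin : ∀ i, IsMin (σ i)) (N : ℕ) :
    (monoMaps {x : α // ∀ i, x ≠ σ i} N).card
      ≤ Dcard σ hk * (N + (Fintype.card α - k)).choose (Fintype.card α - k) := by
  calc (monoMaps {x : α // ∀ i, x ≠ σ i} N).card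
      ≤ (siopMaps {x : α // ∀ i, x ≠ σ i}
          (N + Fintype.card {x : α // ∀ i, x ≠ σ i})).card := mono_le_siop _ _
    _ = _ := by rw [card_compl σ hσ, card_siop_compl σ hk hσ hmin]

end Prefix

/-! ### The FKG step -/

section FKG
variable {α : Type*} [Fintype α] [PartialOrder α] (a z : α) (N : ℕ)

/-- Count of admissible values for a new minimal element `b` added to a monotone map `ω`. -/
noncomputable def cnt (b : α) (ω : {x : α // ∀ i, x ≠ ![z, a] i} → Fin N) : ℕ :=
  (univ.filter fun j : Fin N => ∀ s : {x : α // ∀ i, x ≠ ![z, a] i}, b < s.1 → j ≤ ω s).card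

lemma cnt_mono (b : α) {ω τ : {x : α // ∀ i, x ≠ ![z, a] i} → Fin N} (h : ω ≤ τ) :
    cnt a z N b ω ≤ cnt a z N b τ := by
  apply card_le_card
  intro j hj
  simp only [mem_filter, mem_univ, true_and] at hj ⊢
  exact fun s hs => le_trans (hj s hs) (h s)

lemma fkg_core :
    (∑ ω ∈ monoMaps {x : α // ∀ i, x ≠ ![z, a] i} N, cnt a z N a ω)
      * ∑ ω ∈ monoMaps {x : α // ∀ i, x ≠ ![z, a] i} N, cnt a z N z ω
      ≤ (monoMaps {x : α // ∀ i, x ≠ ![z, a] i} N).card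
        * ∑ ω ∈ monoMaps {x : α // ∀ i, x ≠ ![z, a] i} N, cnt a z N a ω * cnt a z N z ω := by
  set T := {x : α // ∀ i, x ≠ ![z, a] i}
  set Ω := monoMaps T N with hΩ
  have key := four_functions_theorem (β := ℕ)
    (fun ω => if ω ∈ Ω then cnt a z N a ω else 0)
    (fun ω => if ω ∈ Ω then cnt a z N z ω else 0)
    (fun ω => if ω ∈ Ω then 1 else 0)
    (fun ω => if ω ∈ Ω then cnt a z N a ω * cnt a z N z ω else 0)
    (fun ω => by positivity) (fun ω => by positivity) (fun ω => by positivity)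
    (fun ω => by positivity) ?_ Ω Ω
  · rw [monoMaps_sups, monoMaps_infs] at key
    calc (∑ ω ∈ Ω, cnt a z N a ω) * ∑ ω ∈ Ω, cnt a z N z ω
        = (∑ ω ∈ Ω, if ω ∈ Ω then cnt a z N a ω else 0)
          * ∑ ω ∈ Ω, if ω ∈ Ω then cnt a z N z ω else 0 := by
          rw [Finset.sum_congr rfl fun ω h => if_pos h, Finset.sum_congr rfl fun ω h => if_pos h]
      _ ≤ (∑ ω ∈ Ω, if ω ∈ Ω then 1 else 0)
          * ∑ ω ∈ Ω, if ω ∈ Ω then cnt a z N a ω * cnt a z N z ω else 0 := key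
      _ = Ω.card * ∑ ω ∈ Ω, cnt a z N a ω * cnt a z N z ω := by
          rw [Finset.sum_congr rfl fun ω h => if_pos h, Finset.sum_congr rfl fun ω h => if_pos h,
            Finset.sum_const, smul_eq_mul, mul_one]
  · intro u v
    by_cases hu : u ∈ Ω
    · by_cases hv : v ∈ Ω
      · rw [if_pos hu, if_pos hv, if_pos (inf_mem_monoMaps T hu hv),
          if_pos (sup_mem_monoMaps T hu hv), one_mul]
        exact Nat.mul_le_mul (cnt_mono a z N a (le_sup_left : u ≤ u ⊔ v))
          (cnt_mono a z N z (le_sup_right : v ≤ u ⊔ v))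
      · rw [if_neg hv, mul_zero]
        positivity
    · rw [if_neg hu, zero_mul]
      positivity

variable {a z}

lemma sum_cnt_a (ha : IsMin a) (haz : a ≠ z) :
    ∑ ω ∈ monoMaps {x : α // ∀ i, x ≠ ![z, a] i} N, cnt a z N a ω
      = (monoMaps {x : α // ∀ i, x ≠ ![z] i} N).card := by
  have hmemT2 : ∀ (x : α), (∀ i, x ≠ ![z, a] i) ↔ (x ≠ z ∧ x ≠ a) := by
    intro x
    constructor
    · intro h; exact ⟨h 0, h 1⟩
    · rintro ⟨h1, h2⟩ i
      fin_cases i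
      · simpa using h1
      · simpa using h2
  have hmemT1 : ∀ (x : α), (∀ i : Fin 1, x ≠ ![z] i) ↔ x ≠ z := by
    intro x
    constructor
    · intro h; simpa using h 0
    · intro h i; fin_cases i; simpa using h
  rw [show ∑ ω ∈ monoMaps {x : α // ∀ i, x ≠ ![z, a] i} N, cnt a z N a ω
      = ((monoMaps {x : α // ∀ i, x ≠ ![z, a] i} N).sigma
          (fun ω => univ.filter fun j : Fin N =>
            ∀ s : {x : α // ∀ i, x ≠ ![z, a] i}, a < s.1 → j ≤ ω s)).card by
    rw [Finset.card_sigma]; rfl]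
  refine Finset.card_bij'
    (fun p _ => fun x : {x : α // ∀ i, x ≠ ![z] i} =>
      if hxa : x.1 = a then p.2
      else p.1 ⟨x.1, (hmemT2 x.1).2 ⟨(hmemT1 x.1).1 x.2, hxa⟩⟩)
    (fun H _ => ⟨fun x => H ⟨x.1, (hmemT1 x.1).2 ((hmemT2 x.1).1 x.2).1⟩,
      H ⟨a, (hmemT1 a).2 haz⟩⟩) ?_ ?_ ?_ ?_
  · rintro ⟨ω, j⟩ hp
    simp only [Finset.mem_sigma, monoMaps, mem_filter, mem_univ, true_and] at hp
    obtain ⟨hω, hj⟩ := hp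
    simp only [monoMaps, mem_filter, mem_univ, true_and]
    intro x y hxy
    have hxy' : x.1 ≤ y.1 := Subtype.coe_le_coe.2 hxy
    by_cases hxa : x.1 = a <;> by_cases hya : y.1 = a
    · rw [dif_pos hxa, dif_pos hya]
    · rw [dif_pos hxa, dif_neg hya]
      apply hj
      exact lt_of_le_of_ne (hxa ▸ hxy') (Ne.symm hya)
    · exfalso
      have h1 : x.1 ≤ a := le_of_le_of_eq hxy' hya
      exact hxa (le_antisymm h1 (ha h1))
    · rw [dif_neg hxa, dif_neg hya]
      exact hω _ _ (Subtype.mk_le_mk.2 hxy')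
  · intro H hH
    simp only [monoMaps, mem_filter, mem_univ, true_and] at hH
    simp only [Finset.mem_sigma, monoMaps, mem_filter, mem_univ, true_and]
    constructor
    · intro x y hxy
      exact hH _ _ (Subtype.mk_le_mk.2 (Subtype.coe_le_coe.2 hxy))
    · intro s hs
      exact hH _ _ (Subtype.mk_le_mk.2 hs.le)
  · rintro ⟨ω, j⟩ hp
    refine Sigma.ext ?_ ?_
    · funext x
      exact dif_neg ((hmemT2 x.1).1 x.2).2
    · exact heq_of_eq (dif_pos rfl)
  · intro H hH
    funext x
    by_cases hxa : x.1 = a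
    · exact (dif_pos hxa).trans (congrArg H (Subtype.ext hxa.symm))
    · exact dif_neg hxa

lemma sum_cnt_z (hz : IsMin z) (haz : a ≠ z) :
    ∑ ω ∈ monoMaps {x : α // ∀ i, x ≠ ![z, a] i} N, cnt a z N z ω
      = (monoMaps {x : α // ∀ i, x ≠ ![a] i} N).card := by
  have hmemT2 : ∀ (x : α), (∀ i, x ≠ ![z, a] i) ↔ (x ≠ z ∧ x ≠ a) := by
    intro x
    constructor
    · intro h; exact ⟨h 0, h 1⟩
    · rintro ⟨h1, h2⟩ i
      fin_cases i
      · simpa using h1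
      · simpa using h2
  have hmemT1 : ∀ (x : α), (∀ i : Fin 1, x ≠ ![a] i) ↔ x ≠ a := by
    intro x
    constructor
    · intro h; simpa using h 0
    · intro h i; fin_cases i; simpa using h
  rw [show ∑ ω ∈ monoMaps {x : α // ∀ i, x ≠ ![z, a] i} N, cnt a z N z ω
      = ((monoMaps {x : α // ∀ i, x ≠ ![z, a] i} N).sigma
          (fun ω => univ.filter fun j : Fin N =>
            ∀ s : {x : α // ∀ i, x ≠ ![z, a] i}, z < s.1 → j ≤ ω s)).card by
    rw [Finset.card_sigma]; rfl]
  refine Finset.card_bij'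
    (fun p _ => fun x : {x : α // ∀ i, x ≠ ![a] i} =>
      if hxz : x.1 = z then p.2
      else p.1 ⟨x.1, (hmemT2 x.1).2 ⟨hxz, (hmemT1 x.1).1 x.2⟩⟩)
    (fun H _ => ⟨fun x => H ⟨x.1, (hmemT1 x.1).2 ((hmemT2 x.1).1 x.2).2⟩,
      H ⟨z, (hmemT1 z).2 (Ne.symm haz)⟩⟩) ?_ ?_ ?_ ?_
  · rintro ⟨ω, j⟩ hp
    simp only [Finset.mem_sigma, monoMaps, mem_filter, mem_univ, true_and] at hp
    obtain ⟨hω, hj⟩ := hp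
    simp only [monoMaps, mem_filter, mem_univ, true_and]
    intro x y hxy
    have hxy' : x.1 ≤ y.1 := Subtype.coe_le_coe.2 hxy
    by_cases hxz : x.1 = z <;> by_cases hyz : y.1 = z
    · rw [dif_pos hxz, dif_pos hyz]
    · rw [dif_pos hxz, dif_neg hyz]
      apply hj
      exact lt_of_le_of_ne (hxz ▸ hxy') (Ne.symm hyz)
    · exfalso
      have h1 : x.1 ≤ z := le_of_le_of_eq hxy' hyz
      exact hxz (le_antisymm h1 (hz h1))
    · rw [dif_neg hxz, dif_neg hyz]
      exact hω _ _ (Subtype.mk_le_mk.2 hxy')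
  · intro H hH
    simp only [monoMaps, mem_filter, mem_univ, true_and] at hH
    simp only [Finset.mem_sigma, monoMaps, mem_filter, mem_univ, true_and]
    constructor
    · intro x y hxy
      exact hH _ _ (Subtype.mk_le_mk.2 (Subtype.coe_le_coe.2 hxy))
    · intro s hs
      exact hH _ _ (Subtype.mk_le_mk.2 hs.le)
  · rintro ⟨ω, j⟩ hp
    refine Sigma.ext ?_ ?_
    · funext x
      exact dif_neg ((hmemT2 x.1).1 x.2).1
    · exact heq_of_eq (dif_pos rfl)
  · intro H hH
    funext x
    by_cases hxz : x.1 = z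
    · exact (dif_pos hxz).trans (congrArg H (Subtype.ext hxz.symm))
    · exact dif_neg hxz

lemma sum_cnt_mul (ha : IsMin a) (hz : IsMin z) (haz : a ≠ z) :
    ∑ ω ∈ monoMaps {x : α // ∀ i, x ≠ ![z, a] i} N, cnt a z N a ω * cnt a z N z ω
      = (monoMaps {x : α // ∀ i, x ≠ (![] : Fin 0 → α) i} N).card := by
  have hmemT2 : ∀ (x : α), (∀ i, x ≠ ![z, a] i) ↔ (x ≠ z ∧ x ≠ a) := by
    intro x
    constructor
    · intro h; exact ⟨h 0, h 1⟩
    · rintro ⟨h1, h2⟩ i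
      fin_cases i
      · simpa using h1
      · simpa using h2
  have pf0 : ∀ (x : α) (i : Fin 0), x ≠ ![] i := fun x i => i.elim0
  rw [show ∑ ω ∈ monoMaps {x : α // ∀ i, x ≠ ![z, a] i} N, cnt a z N a ω * cnt a z N z ω
      = ((monoMaps {x : α // ∀ i, x ≠ ![z, a] i} N).sigma
          (fun ω => (univ.filter fun j : Fin N =>
              ∀ s : {x : α // ∀ i, x ≠ ![z, a] i}, a < s.1 → j ≤ ω s) ×ˢ
            (univ.filter fun j : Fin N =>
              ∀ s : {x : α // ∀ i, x ≠ ![z, a] i}, z < s.1 → j ≤ ω s))).card by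
    rw [Finset.card_sigma]
    apply Finset.sum_congr rfl
    intro ω _
    rw [Finset.card_product]
    rfl]
  refine Finset.card_bij'
    (fun p _ => fun x : {x : α // ∀ i, x ≠ (![] : Fin 0 → α) i} =>
      if hxa : x.1 = a then p.2.1
      else if hxz : x.1 = z then p.2.2
      else p.1 ⟨x.1, (hmemT2 x.1).2 ⟨hxz, hxa⟩⟩)
    (fun H _ => ⟨fun x => H ⟨x.1, pf0 x.1⟩, (H ⟨a, pf0 a⟩, H ⟨z, pf0 z⟩)⟩) ?_ ?_ ?_ ?_
  · rintro ⟨ω, j⟩ hp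
    simp only [Finset.mem_sigma, Finset.mem_product, monoMaps, mem_filter, mem_univ,
      true_and] at hp
    obtain ⟨hω, hja, hjz⟩ := hp
    simp only [monoMaps, mem_filter, mem_univ, true_and]
    intro x y hxy
    have hxy' : x.1 ≤ y.1 := Subtype.coe_le_coe.2 hxy
    by_cases hxa : x.1 = a <;> by_cases hya : y.1 = a
    · rw [dif_pos hxa, dif_pos hya]
    · rw [dif_pos hxa, dif_neg hya]
      by_cases hyz : y.1 = z
      · exfalso
        have h1 : a ≤ z := le_of_eq_of_le hxa.symm (le_of_le_of_eq hxy' hyz)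
        exact haz (le_antisymm h1 (hz h1))
      · rw [dif_neg hyz]
        exact hja _ (lt_of_le_of_ne (hxa ▸ hxy') (Ne.symm hya))
    · exfalso
      have h1 : x.1 ≤ a := le_of_le_of_eq hxy' hya
      exact hxa (le_antisymm h1 (ha h1))
    · rw [dif_neg hxa, dif_neg hya]
      by_cases hxz : x.1 = z <;> by_cases hyz : y.1 = z
      · rw [dif_pos hxz, dif_pos hyz]
      · rw [dif_pos hxz, dif_neg hyz]
        exact hjz _ (lt_of_le_of_ne (hxz ▸ hxy') (Ne.symm hyz))
      · exfalso
        have h1 : x.1 ≤ z := le_of_le_of_eq hxy' hyz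
        exact hxz (le_antisymm h1 (hz h1))
      · rw [dif_neg hxz, dif_neg hyz]
        exact hω _ _ (Subtype.mk_le_mk.2 hxy')
  · intro H hH
    simp only [monoMaps, mem_filter, mem_univ, true_and] at hH
    simp only [Finset.mem_sigma, Finset.mem_product, monoMaps, mem_filter, mem_univ, true_and]
    refine ⟨fun x y hxy => hH _ _ (Subtype.mk_le_mk.2 (Subtype.coe_le_coe.2 hxy)), ?_, ?_⟩
    · intro s hs
      exact hH _ _ (Subtype.mk_le_mk.2 hs.le)
    · intro s hs
      exact hH _ _ (Subtype.mk_le_mk.2 hs.le)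
  · rintro ⟨ω, j⟩ hp
    refine Sigma.ext ?_ ?_
    · funext x
      exact (dif_neg ((hmemT2 x.1).1 x.2).2).trans (dif_neg ((hmemT2 x.1).1 x.2).1)
    · refine heq_of_eq (Prod.ext ?_ ?_)
      · exact dif_pos rfl
      · exact (dif_neg (fun e : z = a => haz e.symm)).trans (dif_pos rfl)
  · intro H hH
    funext x
    by_cases hxa : x.1 = a
    · exact (dif_pos hxa).trans (congrArg H (Subtype.ext hxa.symm))
    · by_cases hxz : x.1 = z
      · exact (dif_neg hxa).trans ((dif_pos hxz).trans (congrArg H (Subtype.ext hxz.symm)))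
      · exact (dif_neg hxa).trans (dif_neg hxz)

end FKG

/-! ### Limit extraction -/

lemma tendsto_ratio (c i : ℕ) :
    Filter.Tendsto (fun N : ℕ => ((N + c - i : ℕ) : ℝ) / (N : ℝ)) Filter.atTop (nhds 1) := by
  have h0 : Filter.Tendsto (fun N : ℕ => 1 + (((c : ℝ) - (i : ℝ)) / (N : ℝ)))
      Filter.atTop (nhds 1) := by
    simpa using Filter.Tendsto.add (tendsto_const_nhds (x := (1:ℝ)))
      (tendsto_const_div_atTop_nhds_zero_nat ((c : ℝ) - (i : ℝ)))
  apply h0.congr'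
  filter_upwards [Filter.eventually_ge_atTop (max 1 i)] with N hN
  have h2 : i ≤ N + c := le_trans (le_trans (le_max_right _ _) hN) (Nat.le_add_right _ _)
  have hN0 : (N : ℝ) ≠ 0 := by
    have : (1:ℕ) ≤ N := le_trans (le_max_left _ _) hN
    positivity
  rw [Nat.cast_sub h2]
  push_cast
  field_simp
  ring

lemma tendsto_descFactorial_div (c r : ℕ) :
    Filter.Tendsto (fun N : ℕ => (((N + c).descFactorial r : ℕ) : ℝ) / (N : ℝ) ^ r)
      Filter.atTop (nhds 1) := by
  have h : ∀ N : ℕ, (((N + c).descFactorial r : ℕ) : ℝ) / (N : ℝ) ^ r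
      = ∏ i ∈ range r, (((N + c - i : ℕ) : ℝ) / (N : ℝ)) := by
    intro N
    rw [Nat.descFactorial_eq_prod_range, Nat.cast_prod, Finset.prod_div_distrib,
      Finset.prod_const, Finset.card_range]
  have h2 : Filter.Tendsto (fun N : ℕ => ∏ i ∈ range r, (((N + c - i : ℕ) : ℝ) / (N : ℝ)))
      Filter.atTop (nhds (∏ _i ∈ range r, (1:ℝ))) :=
    tendsto_finset_prod _ (fun i _ => tendsto_ratio c i)
  simpa [h] using h2

lemma limit_extract {X Y r s r' s' c d : ℕ} (hrs : r + s = r' + s')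
    (hf : Nat.factorial r * Nat.factorial s ≤ Nat.factorial r' * Nat.factorial s')
    (h : ∀ N : ℕ, X * (N.choose r * N.choose s)
      ≤ Y * ((N + c).choose r' * (N + d).choose s')) : X ≤ Y := by
  have hN : ∀ N : ℕ, (X : ℝ) * ((N.descFactorial r : ℝ) * (N.descFactorial s : ℝ))
      ≤ (Y : ℝ) * (((N + c).descFactorial r' : ℝ) * ((N + d).descFactorial s' : ℝ)) := by
    intro N
    have h1 : X * (N.descFactorial r * N.descFactorial s)
        ≤ Y * ((N + c).descFactorial r' * (N + d).descFactorial s') := by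
      calc X * (N.descFactorial r * N.descFactorial s)
          = X * (N.choose r * N.choose s) * (Nat.factorial r * Nat.factorial s) := by
            rw [Nat.descFactorial_eq_factorial_mul_choose, Nat.descFactorial_eq_factorial_mul_choose]
            ring
        _ ≤ Y * ((N + c).choose r' * (N + d).choose s') * (Nat.factorial r * Nat.factorial s) :=
            Nat.mul_le_mul_right _ (h N)
        _ ≤ Y * ((N + c).choose r' * (N + d).choose s') * (Nat.factorial r' * Nat.factorial s') :=
            Nat.mul_le_mul_left _ hf
        _ = Y * ((N + c).descFactorial r' * (N + d).descFactorial s') := by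
            rw [Nat.descFactorial_eq_factorial_mul_choose, Nat.descFactorial_eq_factorial_mul_choose]
            ring
    exact_mod_cast h1
  have hu : Filter.Tendsto (fun N : ℕ =>
      (X : ℝ) * (((N.descFactorial r : ℕ) : ℝ) / (N : ℝ) ^ r
        * (((N.descFactorial s : ℕ) : ℝ) / (N : ℝ) ^ s))) Filter.atTop (nhds ((X : ℝ) * (1 * 1))) := by
    apply Filter.Tendsto.mul tendsto_const_nhds
    apply Filter.Tendsto.mul
    · simpa using tendsto_descFactorial_div 0 r
    · simpa using tendsto_descFactorial_div 0 s
  have hv : Filter.Tendsto (fun N : ℕ =>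
      (Y : ℝ) * ((((N + c).descFactorial r' : ℕ) : ℝ) / (N : ℝ) ^ r'
        * ((((N + d).descFactorial s' : ℕ) : ℝ) / (N : ℝ) ^ s'))) Filter.atTop
      (nhds ((Y : ℝ) * (1 * 1))) := by
    apply Filter.Tendsto.mul tendsto_const_nhds
    exact Filter.Tendsto.mul (tendsto_descFactorial_div c r') (tendsto_descFactorial_div d s')
  have hcomp : (X : ℝ) * (1 * 1) ≤ (Y : ℝ) * (1 * 1) := by
    apply le_of_tendsto_of_tendsto hu hv
    filter_upwards [Filter.eventually_ge_atTop 1] with N hN1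
    have hN0 : (0 : ℝ) < (N : ℝ) ^ (r + s) := by
      have : (0:ℝ) < (N:ℝ) := by exact_mod_cast hN1
      positivity
    have e1 : (X : ℝ) * (((N.descFactorial r : ℕ) : ℝ) / (N : ℝ) ^ r
        * (((N.descFactorial s : ℕ) : ℝ) / (N : ℝ) ^ s))
        = (X : ℝ) * ((N.descFactorial r : ℝ) * (N.descFactorial s : ℝ)) / (N : ℝ) ^ (r + s) := by
      rw [pow_add]; ring
    have e2 : (Y : ℝ) * ((((N + c).descFactorial r' : ℕ) : ℝ) / (N : ℝ) ^ r'
        * ((((N + d).descFactorial s' : ℕ) : ℝ) / (N : ℝ) ^ s'))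
        = (Y : ℝ) * (((N + c).descFactorial r' : ℝ) * ((N + d).descFactorial s' : ℝ))
          / (N : ℝ) ^ (r + s) := by
      rw [hrs, pow_add]; ring
    rw [e1, e2]
    exact div_le_div_of_nonneg_right (hN N) hN0.le
  have : (X : ℝ) ≤ (Y : ℝ) := by simpa using hcomp
  exact_mod_cast this

/-! ### The key lemma -/

section Key
variable {α : Type*} [Fintype α] [PartialOrder α]

lemma fact_ineq (n : ℕ) (hn : 2 ≤ n) :
    Nat.factorial (n - 1) * Nat.factorial (n - 1)
      ≤ Nat.factorial (n - 2) * Nat.factorial n := by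
  obtain ⟨m, rfl⟩ : ∃ m, n = m + 2 := ⟨n - 2, by omega⟩
  have e1 : m + 2 - 1 = m + 1 := by omega
  have e2 : m + 2 - 2 = m := by omega
  rw [e1, e2]
  calc Nat.factorial (m + 1) * Nat.factorial (m + 1)
      = ((m + 1) * Nat.factorial m) * Nat.factorial (m + 1) := by rw [Nat.factorial_succ]
    _ ≤ ((m + 2) * Nat.factorial m) * Nat.factorial (m + 1) :=
        Nat.mul_le_mul_right _ (Nat.mul_le_mul_right _ (by omega))
    _ = Nat.factorial m * ((m + 2) * Nat.factorial (m + 1)) := by ring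
    _ = Nat.factorial m * Nat.factorial (m + 2) := by rw [← Nat.factorial_succ]

lemma key_min (hn : 2 ≤ Fintype.card α) {a z : α} (ha : IsMin a) (hz : IsMin z) (haz : a ≠ z)
    (h1z : 1 ≤ Fintype.card α) (h1a : 1 ≤ Fintype.card α) (h0 : 0 ≤ Fintype.card α) :
    Dcard ![z] h1z * Dcard ![a] h1a
      ≤ Dcard (![] : Fin 0 → α) h0 * Dcard ![z, a] hn := by
  have hσ1z : Function.Injective ![z] := fun i j _ => Subsingleton.elim i j
  have hσ1a : Function.Injective ![a] := fun i j _ => Subsingleton.elim i j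
  have hmin1z : ∀ i, IsMin (![z] i) := by intro i; fin_cases i; simpa using hz
  have hmin1a : ∀ i, IsMin (![a] i) := by intro i; fin_cases i; simpa using ha
  have hσ2 : Function.Injective ![z, a] := by
    intro i j h
    fin_cases i <;> fin_cases j <;> simp_all
  have hmin2 : ∀ i, IsMin (![z, a] i) := by
    intro i
    fin_cases i
    · simpa using hz
    · simpa using ha
  have hσ0 : Function.Injective (![] : Fin 0 → α) := fun i => i.elim0
  have hmin0 : ∀ i : Fin 0, IsMin ((![] : Fin 0 → α) i) := fun i => i.elim0
  rw [mul_comm (Dcard (![] : Fin 0 → α) h0)]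
  apply limit_extract (r := Fintype.card α - 1) (s := Fintype.card α - 1)
    (r' := Fintype.card α - 2) (s' := Fintype.card α) (c := Fintype.card α - 2)
    (d := Fintype.card α)
  · omega
  · exact fact_ineq _ hn
  · intro N
    calc (Dcard ![z] h1z * Dcard ![a] h1a)
          * (N.choose (Fintype.card α - 1) * N.choose (Fintype.card α - 1))
        = (Dcard ![z] h1z * N.choose (Fintype.card α - 1))
          * (Dcard ![a] h1a * N.choose (Fintype.card α - 1)) := by ring
      _ ≤ (monoMaps {x : α // ∀ i, x ≠ ![z] i} N).card
          * (monoMaps {x : α // ∀ i, x ≠ ![a] i} N).card :=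
          Nat.mul_le_mul (mono_lb ![z] h1z hσ1z hmin1z N) (mono_lb ![a] h1a hσ1a hmin1a N)
      _ = (∑ ω ∈ monoMaps {x : α // ∀ i, x ≠ ![z, a] i} N, cnt a z N a ω)
          * (∑ ω ∈ monoMaps {x : α // ∀ i, x ≠ ![z, a] i} N, cnt a z N z ω) := by
          rw [sum_cnt_a N ha haz, sum_cnt_z N hz haz]
      _ ≤ (monoMaps {x : α // ∀ i, x ≠ ![z, a] i} N).card
          * ∑ ω ∈ monoMaps {x : α // ∀ i, x ≠ ![z, a] i} N, cnt a z N a ω * cnt a z N z ω :=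
          fkg_core a z N
      _ = (monoMaps {x : α // ∀ i, x ≠ ![z, a] i} N).card
          * (monoMaps {x : α // ∀ i, x ≠ (![] : Fin 0 → α) i} N).card := by
          rw [sum_cnt_mul N ha hz haz]
      _ ≤ (Dcard ![z, a] hn * (N + (Fintype.card α - 2)).choose (Fintype.card α - 2))
          * (Dcard (![] : Fin 0 → α) h0 * (N + Fintype.card α).choose (Fintype.card α)) := by
          refine Nat.mul_le_mul (mono_ub ![z, a] hn hσ2 hmin2 N) ?_
          have h2 := mono_ub (![] : Fin 0 → α) h0 hσ0 hmin0 N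
          simpa using h2
      _ = (Dcard ![z, a] hn * Dcard (![] : Fin 0 → α) h0)
          * ((N + (Fintype.card α - 2)).choose (Fintype.card α - 2)
            * (N + Fintype.card α).choose (Fintype.card α)) := by ring

lemma Dcard_single_eq_zero (h1 : 1 ≤ Fintype.card α) {x : α} (hx : ¬ IsMin x) :
    Dcard ![x] h1 = 0 := by
  have hempty : IsEmpty {f : LinExt α // ∀ i, f.1 (![x] i) = Fin.castLE h1 i} := by
    constructor
    rintro ⟨f, hf⟩
    obtain ⟨b, hb⟩ := not_isMin_iff.1 hx
    have h2 := f.2 b x hb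
    have h3 := hf 0
    simp only [Matrix.cons_val_zero] at h3
    rw [h3] at h2
    simp [Fin.lt_def] at h2
  rw [Dcard, Nat.card_of_isEmpty]

lemma Lprime (hn : 2 ≤ Fintype.card α) (h1 : 1 ≤ Fintype.card α) (h0 : 0 ≤ Fintype.card α)
    {x z : α} (hxz : x ≠ z) :
    Dcard ![x] h1 * Dcard ![z] h1 ≤ Dcard (![] : Fin 0 → α) h0 * Dcard ![z, x] hn := by
  by_cases hx : IsMin x
  · by_cases hz : IsMin z
    · rw [mul_comm (Dcard ![x] h1)]
      exact key_min hn hx hz hxz h1 h1 h0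
    · rw [Dcard_single_eq_zero h1 hz]
      simp
  · rw [Dcard_single_eq_zero h1 hx]
    simp

end Key

end Stmt5Aux

set_option maxHeartbeats 1000000 in
/-- Theorem 1.6: for a finite poset on `n ≥ 2` elements and a nonempty subset `A`,
with `f_min(A) = min {f(a) : a ∈ A}`:
(i)  `#{f : f_min(A) > 1}² ≥ #{f : f_min(A) > 2} · e(P)`;
(ii) `#{f : f_min(A) = 1} · #{f : f_min(A) > 1} ≤ #{f : f_min(A) = 2} · e(P)`. -/
theorem stmt5 {α : Type*} [Fintype α] [PartialOrder α]
    (hn : 2 ≤ Fintype.card α) (A : Finset α) (hA : A.Nonempty) :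
    Nat.card {f : LinExt α // 2 < A.inf' hA (leval f)} * linExtCount α ≤
      Nat.card {f : LinExt α // 1 < A.inf' hA (leval f)} ^ 2 ∧
    Nat.card {f : LinExt α // A.inf' hA (leval f) = 1} *
        Nat.card {f : LinExt α // 1 < A.inf' hA (leval f)} ≤
      Nat.card {f : LinExt α // A.inf' hA (leval f) = 2} * linExtCount α := by
  classical
  have h0n : 0 < Fintype.card α := by omega
  have h1n : 1 < Fintype.card α := by omega
  have h1c : 1 ≤ Fintype.card α := by omega
  have h0c : 0 ≤ Fintype.card α := Nat.zero_le _
  set v0 : Fin (Fintype.card α) := ⟨0, h0n⟩ with hv0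
  set v1 : Fin (Fintype.card α) := ⟨1, h1n⟩ with hv1
  -- characterizations of the minimum
  have hsymm_mem : ∀ (f : LinExt α) (v : Fin (Fintype.card α)) (B : Finset α),
      f.1.symm v ∈ B ↔ ∃ b ∈ B, f.1 b = v := by
    intro f v B
    constructor
    · intro h
      exact ⟨f.1.symm v, h, f.1.apply_symm_apply v⟩
    · rintro ⟨b, hb, rfl⟩
      rwa [f.1.symm_apply_apply]
  have hinfge : ∀ f : LinExt α, 1 ≤ A.inf' hA (leval f) := by
    intro f
    apply Finset.le_inf'
    intro b _
    simp [leval]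
  have hle_iff : ∀ (f : LinExt α) (v : ℕ),
      A.inf' hA (leval f) ≤ v ↔ ∃ b ∈ A, (f.1 b : ℕ) + 1 ≤ v := by
    intro f v
    rw [Finset.inf'_le_iff]
    simp [leval]
  have hch1 : ∀ f : LinExt α, A.inf' hA (leval f) = 1 ↔ f.1.symm v0 ∈ A := by
    intro f
    rw [hsymm_mem f v0 A]
    constructor
    · intro h
      obtain ⟨b, hb, hb2⟩ := (hle_iff f 1).1 h.le
      refine ⟨b, hb, Fin.val_injective ?_⟩
      show (f.1 b : ℕ) = 0
      omega
    · rintro ⟨b, hb, hb2⟩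
      refine le_antisymm ?_ (hinfge f)
      rw [hle_iff]
      exact ⟨b, hb, by rw [hb2]⟩
  have hch2 : ∀ f : LinExt α, 1 < A.inf' hA (leval f) ↔ f.1.symm v0 ∉ A := by
    intro f
    constructor
    · intro h hmem
      have h2 := (hch1 f).2 hmem
      omega
    · intro h
      rcases Nat.lt_or_ge 1 (A.inf' hA (leval f)) with h' | h'
      · exact h'
      · exact absurd ((hch1 f).1 (le_antisymm h' (hinfge f))) h
  have hv01 : ∀ (f : LinExt α) (b : α), (f.1 b : ℕ) ≤ 1 → f.1 b = v0 ∨ f.1 b = v1 := by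
    intro f b h
    rcases Nat.le_one_iff_eq_zero_or_eq_one.1 h with h' | h'
    · exact Or.inl (Fin.val_injective h')
    · exact Or.inr (Fin.val_injective h')
  have hch4 : ∀ f : LinExt α, 2 < A.inf' hA (leval f)
      ↔ (f.1.symm v0 ∉ A ∧ f.1.symm v1 ∉ A) := by
    intro f
    constructor
    · intro h
      constructor
      · intro hmem
        obtain ⟨b, hb, hb2⟩ := (hsymm_mem f v0 A).1 hmem
        have h3 : A.inf' hA (leval f) ≤ leval f b := Finset.inf'_le _ hb
        have h4 : leval f b = (f.1 b : ℕ) + 1 := rfl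
        have h5 : (f.1 b : ℕ) = 0 := by rw [hb2]
        omega
      · intro hmem
        obtain ⟨b, hb, hb2⟩ := (hsymm_mem f v1 A).1 hmem
        have h3 : A.inf' hA (leval f) ≤ leval f b := Finset.inf'_le _ hb
        have h4 : leval f b = (f.1 b : ℕ) + 1 := rfl
        have h5 : (f.1 b : ℕ) = 1 := by rw [hb2]
        omega
    · rintro ⟨hm0, hm1⟩
      by_contra hcon
      push_neg at hcon
      obtain ⟨b, hb, hb2⟩ := (hle_iff f 2).1 hcon
      rcases hv01 f b (by omega) with h' | h'
      · exact hm0 ((hsymm_mem f v0 A).2 ⟨b, hb, h'⟩)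
      · exact hm1 ((hsymm_mem f v1 A).2 ⟨b, hb, h'⟩)
  have hch3 : ∀ f : LinExt α, A.inf' hA (leval f) = 2
      ↔ (f.1.symm v0 ∉ A ∧ f.1.symm v1 ∈ A) := by
    intro f
    constructor
    · intro h
      have h2 : f.1.symm v0 ∉ A := (hch2 f).1 (by omega)
      refine ⟨h2, ?_⟩
      obtain ⟨b, hb, hb2⟩ := (hle_iff f 2).1 h.le
      rcases hv01 f b (by omega) with h' | h'
      · exact absurd ((hsymm_mem f v0 A).2 ⟨b, hb, h'⟩) h2
      · exact (hsymm_mem f v1 A).2 ⟨b, hb, h'⟩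
    · rintro ⟨hm0, hm1⟩
      have hgt : 1 < A.inf' hA (leval f) := (hch2 f).2 hm0
      obtain ⟨b, hb, hb2⟩ := (hsymm_mem f v1 A).1 hm1
      have h3 : A.inf' hA (leval f) ≤ leval f b := Finset.inf'_le _ hb
      have h4 : leval f b = (f.1 b : ℕ) + 1 := rfl
      have h5 : (f.1 b : ℕ) = 1 := by rw [hb2]
      omega
  -- counting sets
  set L : Finset (LinExt α) := univ with hL
  set S1 := L.filter (fun f : LinExt α => f.1.symm v0 ∈ A) with hS1
  set T1 := L.filter (fun f : LinExt α => f.1.symm v0 ∉ A) with hT1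
  set S2 := L.filter (fun f : LinExt α => f.1.symm v0 ∉ A ∧ f.1.symm v1 ∈ A) with hS2
  set T2 := L.filter (fun f : LinExt α => f.1.symm v0 ∉ A ∧ f.1.symm v1 ∉ A) with hT2
  have hcard : ∀ (p q : LinExt α → Prop) (_ : DecidablePred q), (∀ f, p f ↔ q f) →
      Nat.card {f : LinExt α // p f} = (L.filter q).card := by
    intro p q instq hpq
    rw [Nat.card_eq_fintype_card, Fintype.card_subtype]
    apply congrArg Finset.card
    rw [hL]
    ext f
    simp only [Finset.mem_filter, Finset.mem_univ, true_and]
    exact hpq f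
  have hN1 : Nat.card {f : LinExt α // A.inf' hA (leval f) = 1} = S1.card := by
    rw [hS1]; exact hcard _ _ _ hch1
  have hP1 : Nat.card {f : LinExt α // 1 < A.inf' hA (leval f)} = T1.card := by
    rw [hT1]; exact hcard _ _ _ hch2
  have hN2 : Nat.card {f : LinExt α // A.inf' hA (leval f) = 2} = S2.card := by
    rw [hS2]; exact hcard _ _ _ hch3
  have hP2 : Nat.card {f : LinExt α // 2 < A.inf' hA (leval f)} = T2.card := by
    rw [hT2]; exact hcard _ _ _ hch4
  have he : linExtCount α = L.card := by
    rw [linExtCount, Nat.card_eq_fintype_card, hL, Finset.card_univ]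
  -- partitions
  have hi1 : S1.card + T1.card = L.card := by
    rw [hS1, hT1]
    exact Finset.card_filter_add_card_filter_not _
  have hi2 : S2.card + T2.card = T1.card := by
    have e1 : S2 = T1.filter (fun f : LinExt α => f.1.symm v1 ∈ A) := by
      rw [hS2, hT1, Finset.filter_filter]
    have e2 : T2 = T1.filter (fun f : LinExt α => ¬ f.1.symm v1 ∈ A) := by
      rw [hT2, hT1, Finset.filter_filter]
    rw [e1, e2]
    exact Finset.card_filter_add_card_filter_not _
  -- fiber decompositions
  have hfib1 : ∀ (B : Finset α),
      (L.filter (fun f : LinExt α => f.1.symm v0 ∈ B)).card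
        = ∑ x ∈ B, (L.filter (fun f : LinExt α => f.1.symm v0 = x)).card := by
    intro B
    rw [Finset.card_eq_sum_card_fiberwise (f := fun f : LinExt α => f.1.symm v0) (t := B)
      (s := L.filter (fun f : LinExt α => f.1.symm v0 ∈ B))
      (fun f hf => Finset.mem_coe.2 (Finset.mem_filter.1 (Finset.mem_coe.1 hf)).2)]
    apply Finset.sum_congr rfl
    intro x hx
    apply congrArg Finset.card
    ext f
    simp only [Finset.mem_filter, hL, Finset.mem_univ, true_and]
    constructor
    · rintro ⟨h1, h2⟩
      exact h2
    · intro h2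
      exact ⟨h2 ▸ hx, h2⟩
  have hT1B : T1 = L.filter (fun f : LinExt α => f.1.symm v0 ∈ univ \ A) := by
    rw [hT1]
    apply Finset.filter_congr
    intro f _
    simp [Finset.mem_sdiff]
  have hfib2 : S2.card = ∑ p ∈ (univ \ A) ×ˢ A, (L.filter (fun f : LinExt α =>
      f.1.symm v0 = p.1 ∧ f.1.symm v1 = p.2)).card := by
    rw [hS2]
    rw [Finset.card_eq_sum_card_fiberwise
      (f := fun f : LinExt α => (f.1.symm v0, f.1.symm v1)) (t := (univ \ A) ×ˢ A)
      (fun f hf => by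
        have h2 := (Finset.mem_filter.1 hf).2
        simp only [Finset.mem_coe, Finset.mem_product, Finset.mem_sdiff, Finset.mem_univ, true_and]
        exact h2)]
    apply Finset.sum_congr rfl
    intro p hp
    obtain ⟨p1, p2⟩ := p
    rw [Finset.mem_product, Finset.mem_sdiff] at hp
    apply congrArg Finset.card
    ext f
    simp only [Finset.mem_filter, hL, Finset.mem_univ, true_and, Prod.mk.injEq]
    constructor
    · rintro ⟨h1, h2, h3⟩
      exact ⟨h2, h3⟩
    · rintro ⟨h2, h3⟩
      refine ⟨⟨?_, ?_⟩, h2, h3⟩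
      · rw [h2]; exact hp.1.2
      · rw [h3]; exact hp.2
  -- identification with Dcard
  have hDfib1 : ∀ x : α, (L.filter (fun f : LinExt α => f.1.symm v0 = x)).card
      = Stmt5Aux.Dcard ![x] h1c := by
    intro x
    rw [Stmt5Aux.Dcard, Nat.card_eq_fintype_card, Fintype.card_subtype]
    apply congrArg Finset.card
    ext f
    simp only [Finset.mem_filter, hL, Finset.mem_univ, true_and]
    constructor
    · intro h i
      have hi : i = 0 := Subsingleton.elim i 0
      subst hi
      rw [Matrix.cons_val_zero]
      have h2 : f.1 (f.1.symm v0) = v0 := f.1.apply_symm_apply v0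
      rw [h] at h2
      rw [h2]
      rfl
    · intro h
      have h2 := h 0
      rw [Matrix.cons_val_zero] at h2
      have h3 : Fin.castLE h1c (0 : Fin 1) = v0 := rfl
      rw [h3] at h2
      rw [← h2, f.1.symm_apply_apply]
  have hDfib2 : ∀ z x : α, (L.filter (fun f : LinExt α =>
      f.1.symm v0 = z ∧ f.1.symm v1 = x)).card = Stmt5Aux.Dcard ![z, x] hn := by
    intro z x
    rw [Stmt5Aux.Dcard, Nat.card_eq_fintype_card, Fintype.card_subtype]
    apply congrArg Finset.card
    ext f
    simp only [Finset.mem_filter, hL, Finset.mem_univ, true_and]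
    constructor
    · rintro ⟨h1, h2⟩ i
      fin_cases i
      · show f.1 (![z, x] 0) = Fin.castLE hn 0
        rw [Matrix.cons_val_zero]
        have h3 : f.1 (f.1.symm v0) = v0 := f.1.apply_symm_apply v0
        rw [h1] at h3
        rw [h3]
        rfl
      · show f.1 (![z, x] 1) = Fin.castLE hn 1
        rw [Matrix.cons_val_one, Matrix.cons_val_zero]
        have h3 : f.1 (f.1.symm v1) = v1 := f.1.apply_symm_apply v1
        rw [h2] at h3
        rw [h3]
        rfl
    · intro h
      have h2 := h 0
      have h3 := h 1
      rw [Matrix.cons_val_zero] at h2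
      rw [Matrix.cons_val_one, Matrix.cons_val_zero] at h3
      have e2 : Fin.castLE hn (0 : Fin 2) = v0 := rfl
      have e3 : Fin.castLE hn (1 : Fin 2) = v1 := rfl
      rw [e2] at h2
      rw [e3] at h3
      constructor
      · rw [← h2, f.1.symm_apply_apply]
      · rw [← h3, f.1.symm_apply_apply]
  have hD0 : Stmt5Aux.Dcard (![] : Fin 0 → α) h0c = L.card := by
    rw [Stmt5Aux.Dcard, Nat.card_eq_fintype_card, Fintype.card_subtype, hL]
    apply congrArg Finset.card
    ext f
    simp only [Finset.mem_filter, Finset.mem_univ, true_and, iff_true]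
    intro i
    exact i.elim0
  -- the key summed inequality
  have hkey : S1.card * T1.card ≤ L.card * S2.card := by
    rw [hS1, hT1B, hfib1 A, hfib1 (univ \ A), hfib2]
    rw [Finset.sum_mul_sum, Finset.mul_sum, Finset.sum_product]
    rw [Finset.sum_comm]
    apply Finset.sum_le_sum
    intro z hz
    apply Finset.sum_le_sum
    intro x hx
    have hxz : x ≠ z := by
      intro e
      exact (Finset.mem_sdiff.1 hz).2 (e ▸ hx)
    rw [hDfib1 x, hDfib1 z, hDfib2 z x, ← hD0]
    exact Stmt5Aux.Lprime hn h1c h0c hxz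
  -- conclude
  have hstar : S1.card * T2.card ≤ S2.card * T1.card := by
    have h1 : S1.card * S2.card + S1.card * T2.card
        ≤ S1.card * S2.card + S2.card * T1.card := by
      calc S1.card * S2.card + S1.card * T2.card = S1.card * T1.card := by
            rw [← hi2]; ring
        _ ≤ L.card * S2.card := hkey
        _ = S1.card * S2.card + S2.card * T1.card := by rw [← hi1]; ring
    exact le_of_add_le_add_left h1
  constructor
  · rw [hP2, hP1, he]
    calc T2.card * L.card = S1.card * T2.card + T2.card * T1.card := by
          rw [← hi1]; ring
      _ ≤ S2.card * T1.card + T2.card * T1.card := Nat.add_le_add_right hstar _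
      _ = T1.card ^ 2 := by rw [← hi2]; ring
  · rw [hN1, hP1, hN2, he]
    calc S1.card * T1.card ≤ L.card * S2.card := hkey
      _ = S2.card * L.card := mul_comm _ _
end

section
/- Let M be a symmetric d × d real matrix with nonnegative entries that is hyperbolic, and let x, y, z ∈ ℝ₊^d be vectors with nonnegative coordinates. Then either Mx = My = Mz = 0, or there exists v ∈ ℝ₊^d such that ⟨x + εv, M(x + εv)⟩ > 0 for all ε > 0. -/
open Matrix

/-- A matrix `M` is hyperbolic if `⟨x, My⟩² ≥ ⟨x, Mx⟩·⟨y, My⟩` for all `x, y`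
with `⟨y, My⟩ ≥ 0`. -/
def IsHyperbolic {d : ℕ} (M : Matrix (Fin d) (Fin d) ℝ) : Prop :=
  ∀ x y : Fin d → ℝ, 0 ≤ y ⬝ᵥ (M *ᵥ y) →
    (x ⬝ᵥ (M *ᵥ x)) * (y ⬝ᵥ (M *ᵥ y)) ≤ (x ⬝ᵥ (M *ᵥ y)) ^ 2

lemma dot_mulVec_nonneg {d : ℕ} (M : Matrix (Fin d) (Fin d) ℝ)
    (hnn : ∀ i j, 0 ≤ M i j) (u w : Fin d → ℝ) (hu : ∀ i, 0 ≤ u i)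
    (hw : ∀ i, 0 ≤ w i) : 0 ≤ u ⬝ᵥ (M *ᵥ w) := by
  simp only [dotProduct, mulVec]
  apply Finset.sum_nonneg
  intro i _
  apply mul_nonneg (hu i)
  apply Finset.sum_nonneg
  intro j _
  exact mul_nonneg (hnn i j) (hw j)

/-- Lemma 4.1: for a nonnegative symmetric hyperbolic matrix `M` and nonnegative
vectors `x, y, z`, either `Mx = My = Mz = 0`, or there is a nonnegative vector `v`
with `⟨x + εv, M(x + εv)⟩ > 0` for all `ε > 0`. -/
theorem stmt14 {d : ℕ} (M : Matrix (Fin d) (Fin d) ℝ)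
    (hsymm : M.IsSymm) (hnn : ∀ i j, 0 ≤ M i j) (hhyp : IsHyperbolic M)
    (x y z : Fin d → ℝ) (hx : ∀ i, 0 ≤ x i) (hy : ∀ i, 0 ≤ y i) (hz : ∀ i, 0 ≤ z i) :
    (M *ᵥ x = 0 ∧ M *ᵥ y = 0 ∧ M *ᵥ z = 0) ∨
      ∃ v : Fin d → ℝ, (∀ i, 0 ≤ v i) ∧
        ∀ ε : ℝ, 0 < ε → 0 < (x + ε • v) ⬝ᵥ (M *ᵥ (x + ε • v)) := by
  by_cases hM : M = 0
  · left
    subst hM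
    simp
  · right
    refine ⟨fun _ => 1, fun _ => zero_le_one, fun ε hε => ?_⟩
    set v : Fin d → ℝ := fun _ => 1 with hv
    have hvnn : ∀ i, (0:ℝ) ≤ v i := fun _ => zero_le_one
    have hexp : (x + ε • v) ⬝ᵥ (M *ᵥ (x + ε • v)) =
        x ⬝ᵥ (M *ᵥ x) + ε * (x ⬝ᵥ (M *ᵥ v)) + ε * (v ⬝ᵥ (M *ᵥ x))
          + ε ^ 2 * (v ⬝ᵥ (M *ᵥ v)) := by
      simp [mulVec_add, mulVec_smul, dotProduct_add, add_dotProduct,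
        dotProduct_smul, smul_dotProduct, smul_eq_mul]
      ring
    -- one positive entry of M
    obtain ⟨i, j, hij⟩ : ∃ i j, M i j ≠ 0 := by
      by_contra h
      push_neg at h
      exact hM (by ext i j; simpa using h i j)
    have hijpos : 0 < M i j := lt_of_le_of_ne (hnn i j) (Ne.symm hij)
    have hvMv : 0 < v ⬝ᵥ (M *ᵥ v) := by
      unfold dotProduct mulVec
      have : (0:ℝ) < ∑ a, ∑ b, M a b := by
        have h1 : (0:ℝ) < ∑ b, M i b :=
          Finset.sum_pos' (fun b _ => hnn i b) ⟨j, Finset.mem_univ j, hijpos⟩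
        exact Finset.sum_pos' (fun a _ => Finset.sum_nonneg fun b _ => hnn a b)
          ⟨i, Finset.mem_univ i, h1⟩
      simpa [hv, dotProduct] using this
    rw [hexp]
    have h1 := dot_mulVec_nonneg M hnn x x hx hx
    have h2 := dot_mulVec_nonneg M hnn x v hx hvnn
    have h3 := dot_mulVec_nonneg M hnn v x hvnn hx
    have h4 : 0 < ε ^ 2 * (v ⬝ᵥ (M *ᵥ v)) := mul_pos (pow_pos hε 2) hvMv
    nlinarith
end

section
/- Let M be a symmetric d × d real matrix with nonnegative entries that is hyperbolic, and let x, y, z ∈ ℝ₊^d be vectors with nonnegative coordinates. Writing M_{uv} := ⟨u, Mv⟩, we have ( M_{yz} M_{xx} − M_{xy} M_{xz} )² ≤ ( M_{xy}² − M_{xx} M_{yy} ) · ( M_{xz}² − M_{xx} M_{zz} ). -/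
open Matrix

lemma symm_dot {d : ℕ} (M : Matrix (Fin d) (Fin d) ℝ) (hsymm : M.IsSymm)
    (u v : Fin d → ℝ) : u ⬝ᵥ (M *ᵥ v) = v ⬝ᵥ (M *ᵥ u) := by
  simp only [dotProduct, mulVec, dotProduct, Finset.mul_sum]
  rw [Finset.sum_comm]
  refine Finset.sum_congr rfl fun i _ => Finset.sum_congr rfl fun j _ => ?_
  have := hsymm.apply i j
  ring_nf
  rw [this]
  ring

/-- Lemma 4.2: for a nonnegative symmetric hyperbolic matrix `M` and nonnegative
vectors `x, y, z`, writing `M_{uv} = ⟨u, Mv⟩`,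
`(M_{yz} M_{xx} − M_{xy} M_{xz})² ≤ (M_{xy}² − M_{xx} M_{yy}) · (M_{xz}² − M_{xx} M_{zz})`. -/
theorem stmt15 {d : ℕ} (M : Matrix (Fin d) (Fin d) ℝ)
    (hsymm : M.IsSymm) (hnn : ∀ i j, 0 ≤ M i j) (hhyp : IsHyperbolic M)
    (x y z : Fin d → ℝ) (hx : ∀ i, 0 ≤ x i) (hy : ∀ i, 0 ≤ y i) (hz : ∀ i, 0 ≤ z i) :
    ((y ⬝ᵥ (M *ᵥ z)) * (x ⬝ᵥ (M *ᵥ x)) - (x ⬝ᵥ (M *ᵥ y)) * (x ⬝ᵥ (M *ᵥ z))) ^ 2 ≤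
      ((x ⬝ᵥ (M *ᵥ y)) ^ 2 - (x ⬝ᵥ (M *ᵥ x)) * (y ⬝ᵥ (M *ᵥ y))) *
        ((x ⬝ᵥ (M *ᵥ z)) ^ 2 - (x ⬝ᵥ (M *ᵥ x)) * (z ⬝ᵥ (M *ᵥ z))) := by
  -- M_xx ≥ 0
  have hqx : 0 ≤ x ⬝ᵥ (M *ᵥ x) := by
    simp only [dotProduct, mulVec]
    refine Finset.sum_nonneg fun i _ => mul_nonneg (hx i) ?_
    exact Finset.sum_nonneg fun j _ => mul_nonneg (hnn i j) (hx j)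
  set B : (Fin d → ℝ) → (Fin d → ℝ) → ℝ :=
    fun u v => (x ⬝ᵥ (M *ᵥ u)) * (x ⬝ᵥ (M *ᵥ v)) - (x ⬝ᵥ (M *ᵥ x)) * (u ⬝ᵥ (M *ᵥ v))
    with hBdef
  have hB : ∀ u : Fin d → ℝ, 0 ≤ B u u := by
    intro u
    rcases le_or_gt 0 (u ⬝ᵥ (M *ᵥ u)) with h | h
    · have := hhyp x u h
      simp only [hBdef]
      nlinarith [this]
    · simp only [hBdef]
      nlinarith [sq_nonneg (x ⬝ᵥ (M *ᵥ u)), hqx, h]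
  -- quadratic in t : B(y + t z, y + t z) ≥ 0
  have hquad : ∀ t : ℝ, 0 ≤ B z z * (t * t) + 2 * B y z * t + B y y := by
    intro t
    have h := hB (y + t • z)
    have e1 : x ⬝ᵥ (M *ᵥ (y + t • z)) = x ⬝ᵥ (M *ᵥ y) + t * (x ⬝ᵥ (M *ᵥ z)) := by
      rw [mulVec_add, mulVec_smul, dotProduct_add, dotProduct_smul, smul_eq_mul]
    have e2 : (y + t • z) ⬝ᵥ (M *ᵥ (y + t • z))
        = y ⬝ᵥ (M *ᵥ y) + 2 * t * (y ⬝ᵥ (M *ᵥ z)) + t * t * (z ⬝ᵥ (M *ᵥ z)) := by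
      have hyz := symm_dot M hsymm z y
      simp only [mulVec_add, mulVec_smul, dotProduct_add, add_dotProduct,
        dotProduct_smul, smul_dotProduct, smul_eq_mul]
      rw [hyz]
      ring
    simp only [hBdef] at h ⊢
    rw [e1, e2] at h
    nlinarith [h]
  have hd := discrim_le_zero hquad
  rw [discrim] at hd
  have key : B y z ^ 2 ≤ B y y * B z z := by nlinarith [hd]
  have hyz := symm_dot M hsymm y z
  simp only [hBdef] at key
  nlinarith [key]
end

section
/- Let M be a symmetric d × d real matrix with nonnegative entries that is hyperbolic, and let x, y, z ∈ ℝ₊^d be vectors with nonnegative coordinates. Writing M_{uv} := ⟨u, Mv⟩, we have M_{zz} · M_{xy} ≤ 2 · M_{xz} · M_{yz}. -/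
open Matrix

/-- Lemma 4.5: for a nonnegative symmetric hyperbolic matrix `M` and nonnegative
vectors `x, y, z`, writing `M_{uv} = ⟨u, Mv⟩`, `M_{zz} M_{xy} ≤ 2 M_{xz} M_{yz}`. -/
theorem stmt17 {d : ℕ} (M : Matrix (Fin d) (Fin d) ℝ)
    (hsymm : M.IsSymm) (hnn : ∀ i j, 0 ≤ M i j) (hhyp : IsHyperbolic M)
    (x y z : Fin d → ℝ) (hx : ∀ i, 0 ≤ x i) (hy : ∀ i, 0 ≤ y i) (hz : ∀ i, 0 ≤ z i) :
    (z ⬝ᵥ (M *ᵥ z)) * (x ⬝ᵥ (M *ᵥ y)) ≤ 2 * (x ⬝ᵥ (M *ᵥ z)) * (y ⬝ᵥ (M *ᵥ z)) := by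
  have nn : ∀ u v : Fin d → ℝ, (∀ i, 0 ≤ u i) → (∀ i, 0 ≤ v i) → 0 ≤ u ⬝ᵥ (M *ᵥ v) := by
    intro u v hu hv
    simp only [dotProduct, Matrix.mulVec]
    apply Finset.sum_nonneg
    intro i _
    exact mul_nonneg (hu i)
      (Finset.sum_nonneg fun j _ => mul_nonneg (hnn i j) (hv j))
  have hsym : ∀ u v : Fin d → ℝ, u ⬝ᵥ (M *ᵥ v) = v ⬝ᵥ (M *ᵥ u) := by
    intro u v
    rw [dotProduct_mulVec, ← Matrix.mulVec_transpose, hsymm.eq, dotProduct_comm]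
  set a := x ⬝ᵥ (M *ᵥ z) with ha
  set b := y ⬝ᵥ (M *ᵥ z) with hb
  set c := x ⬝ᵥ (M *ᵥ y) with hc
  set e := z ⬝ᵥ (M *ᵥ z) with he
  have hzz : (0:ℝ) ≤ e := nn z z hz hz
  have hae : (0:ℝ) ≤ a := nn x z hx hz
  have hbe : (0:ℝ) ≤ b := nn y z hy hz
  have hce : (0:ℝ) ≤ c := nn x y hx hy
  have key : ∀ s t : ℝ, 0 ≤ s → 0 ≤ t → 2*s*t*(c*e) ≤ (s*a + t*b)^2 := by
    intro s t hs ht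
    have h := hhyp (s • x + t • y) z hzz
    have e1 : (s • x + t • y) ⬝ᵥ (M *ᵥ z) = s*a + t*b := by
      simp [add_dotProduct, smul_dotProduct, smul_eq_mul, ha, hb]
    have e2 : (s • x + t • y) ⬝ᵥ (M *ᵥ (s • x + t • y))
        = s^2*(x ⬝ᵥ (M *ᵥ x)) + 2*(s*t)*c + t^2*(y ⬝ᵥ (M *ᵥ y)) := by
      rw [mulVec_add, mulVec_smul, mulVec_smul]
      simp only [add_dotProduct, smul_dotProduct, dotProduct_add, dotProduct_smul,
        smul_eq_mul]
      rw [hsym y x]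
      ring
    rw [e1, e2] at h
    nlinarith [mul_nonneg (nn x x hx hx) hzz, mul_nonneg (nn y y hy hy) hzz,
      sq_nonneg s, sq_nonneg t,
      mul_nonneg (mul_nonneg (sq_nonneg s) (nn x x hx hx)) hzz,
      mul_nonneg (mul_nonneg (sq_nonneg t) (nn y y hy hy)) hzz]
  rcases eq_or_lt_of_le hae with haz | hap
  · -- a = 0
    rcases eq_or_lt_of_le hbe with hbz | hbp
    · have h := key 1 1 zero_le_one zero_le_one
      nlinarith
    · have h := key (b^2) (c*e) (sq_nonneg b) (mul_nonneg hce hzz)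
      rw [← haz] at h
      have hce0 : c*e ≤ 0 := by
        by_contra h'
        push_neg at h'
        nlinarith [h, mul_pos (mul_pos h' h') (mul_pos hbp hbp)]
      nlinarith
  rcases eq_or_lt_of_le hbe with hbz | hbp
  · have h := key (c*e) (a^2) (mul_nonneg hce hzz) (sq_nonneg a)
    rw [← hbz] at h
    have hce0 : c*e ≤ 0 := by
      by_contra h'
      push_neg at h'
      nlinarith [h, mul_pos (mul_pos h' h') (mul_pos hap hap)]
    nlinarith
  · have h := key b a hbe hae
    nlinarith [mul_pos hap hbp]
end

section
/- Let M be a symmetric d × d real matrix with nonnegative entries that is hyperbolic, and let x, y, z ∈ ℝ₊^d be vectors with nonnegative coordinates. Writing M_{uv} := ⟨u, Mv⟩, at least two of the following three inequalities hold: M_{xx} M_{yz} ≤ M_{xy} M_{xz}, M_{yy} M_{xz} ≤ M_{xy} M_{yz}, and M_{zz} M_{xy} ≤ M_{xz} M_{yz}. -/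
open Matrix

/-- Lemma 4.6: for a nonnegative symmetric hyperbolic matrix `M` and nonnegative
vectors `x, y, z`, writing `M_{uv} = ⟨u, Mv⟩`, at least two of the three inequalities
`M_{xx} M_{yz} ≤ M_{xy} M_{xz}`, `M_{yy} M_{xz} ≤ M_{xy} M_{yz}`,
`M_{zz} M_{xy} ≤ M_{xz} M_{yz}` hold. -/
theorem stmt18 {d : ℕ} (M : Matrix (Fin d) (Fin d) ℝ)
    (hsymm : M.IsSymm) (hnn : ∀ i j, 0 ≤ M i j) (hhyp : IsHyperbolic M)
    (x y z : Fin d → ℝ) (hx : ∀ i, 0 ≤ x i) (hy : ∀ i, 0 ≤ y i) (hz : ∀ i, 0 ≤ z i) :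
    ((x ⬝ᵥ (M *ᵥ x)) * (y ⬝ᵥ (M *ᵥ z)) ≤ (x ⬝ᵥ (M *ᵥ y)) * (x ⬝ᵥ (M *ᵥ z)) ∧
      (y ⬝ᵥ (M *ᵥ y)) * (x ⬝ᵥ (M *ᵥ z)) ≤ (x ⬝ᵥ (M *ᵥ y)) * (y ⬝ᵥ (M *ᵥ z))) ∨
    ((x ⬝ᵥ (M *ᵥ x)) * (y ⬝ᵥ (M *ᵥ z)) ≤ (x ⬝ᵥ (M *ᵥ y)) * (x ⬝ᵥ (M *ᵥ z)) ∧
      (z ⬝ᵥ (M *ᵥ z)) * (x ⬝ᵥ (M *ᵥ y)) ≤ (x ⬝ᵥ (M *ᵥ z)) * (y ⬝ᵥ (M *ᵥ z))) ∨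
    ((y ⬝ᵥ (M *ᵥ y)) * (x ⬝ᵥ (M *ᵥ z)) ≤ (x ⬝ᵥ (M *ᵥ y)) * (y ⬝ᵥ (M *ᵥ z)) ∧
      (z ⬝ᵥ (M *ᵥ z)) * (x ⬝ᵥ (M *ᵥ y)) ≤ (x ⬝ᵥ (M *ᵥ z)) * (y ⬝ᵥ (M *ᵥ z))) := by
  have key : ∀ u v : Fin d → ℝ, (∀ i, 0 ≤ u i) → (∀ i, 0 ≤ v i) →
      0 ≤ u ⬝ᵥ (M *ᵥ v) := by
    intro u v hu hv
    simp only [dotProduct, Matrix.mulVec]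
    refine Finset.sum_nonneg fun i _ => mul_nonneg (hu i) ?_
    exact Finset.sum_nonneg fun j _ => mul_nonneg (hnn i j) (hv j)
  set a := x ⬝ᵥ (M *ᵥ x) with ha
  set b := y ⬝ᵥ (M *ᵥ y) with hb
  set c := z ⬝ᵥ (M *ᵥ z) with hc
  set p := x ⬝ᵥ (M *ᵥ y) with hp
  set q := x ⬝ᵥ (M *ᵥ z) with hq
  set r := y ⬝ᵥ (M *ᵥ z) with hr
  have hb0 : 0 ≤ b := key y y hy hy
  have hc0 : 0 ≤ c := key z z hz hz
  have ha0 : 0 ≤ a := key x x hx hx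
  have hp0 : 0 ≤ p := key x y hx hy
  have hq0 : 0 ≤ q := key x z hx hz
  have hr0 : 0 ≤ r := key y z hy hz
  have h1 : a * b ≤ p ^ 2 := hhyp x y hb0
  have h2 : a * c ≤ q ^ 2 := hhyp x z hc0
  have h3 : b * c ≤ r ^ 2 := hhyp y z hc0
  by_cases hA : a * r ≤ p * q
  · by_cases hB : b * q ≤ p * r
    · exact Or.inl ⟨hA, hB⟩
    · refine Or.inr (Or.inl ⟨hA, ?_⟩)
      by_contra hC
      push_neg at hB hC
      -- failures hB : p*r < b*q and hC : q*r < c*p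
      nlinarith [mul_lt_mul'' hB hC (mul_nonneg hp0 hr0) (mul_nonneg hq0 hr0),
        mul_nonneg hp0 hq0, mul_nonneg (mul_nonneg hp0 hq0) hr0,
        mul_le_mul_of_nonneg_right h3 (mul_nonneg hp0 hq0)]
  · push_neg at hA
    have hB : b * q ≤ p * r := by
      by_contra hB
      push_neg at hB
      nlinarith [mul_lt_mul'' hA hB (mul_nonneg hp0 hq0) (mul_nonneg hp0 hr0),
        mul_nonneg hq0 hr0, mul_nonneg (mul_nonneg hp0 hq0) hr0,
        mul_le_mul_of_nonneg_right h1 (mul_nonneg hq0 hr0)]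
    have hC : c * p ≤ q * r := by
      by_contra hC
      push_neg at hC
      nlinarith [mul_lt_mul'' hA hC (mul_nonneg hp0 hq0) (mul_nonneg hq0 hr0),
        mul_nonneg hp0 hr0, mul_nonneg (mul_nonneg hp0 hq0) hr0,
        mul_le_mul_of_nonneg_right h2 (mul_nonneg hp0 hr0)]
    exact Or.inr (Or.inr ⟨hB, hC⟩)
end
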